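/- arXiv:0902.4393 — 6 statements merged into one kernel-verified Lean document; each statement's English description precedes it below -/
import Mathlib

section
/- Let X be a proper normal integral scheme over a field K of characteristic p > 0 with H^0(X, O_X) = K, and let K ⊂ K' be a purely inseparable field extension of degree p. Then X ⊗_K K' is an integral scheme. -/
/-!
Write `F` for the function field of `X` and `K' = K(a)` with `a ^ p = c ∈ K`. Normality of `X`
together with `H⁰(X, 𝒪_X) = K` makes `K` integrally closed in `F`: an element of `F` integral
over `K` lies in every stalk, hence glues to a global section. So `c`, which has no `p`-th root in
`K`, has none in `F` either, `T ^ p - c` is irreducible over `F`, and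
`F ⊗_K K' ≅ F[T]/(T ^ p - c)` is a field. For an affine open `U` of `X` the ring `Γ(U)` embeds
into `F`, so by flatness `Γ(U) ⊗_K K'` embeds into `F ⊗_K K'` and is a domain. Hence `X_{K'}` is
covered by integral open subschemes, and these pairwise meet because `X_{K'} → X` is surjective
and `X` is irreducible; such a scheme is integral.
-/

open AlgebraicGeometry CategoryTheory

open Polynomial TensorProduct

theorem IsPurelyInseparable.exists_pow_eq_algebraMap_of_finrank_eq_prime {p : ℕ} [Fact p.Prime]
    {K K' : Type*} [Field K] [Field K'] [Algebra K K'] [ExpChar K p] [IsPurelyInseparable K K']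
    (hdeg : Module.finrank K K' = p) (b : K') :
    ∃ y : K, b ^ p = algebraMap K K' y := by
  have hp : p.Prime := Fact.out
  have : FiniteDimensional K K' := Module.finite_of_finrank_pos (hdeg ▸ hp.pos)
  obtain ⟨n, y, hmin⟩ := IsPurelyInseparable.minpoly_eq_X_pow_sub_C K p b
  have hdvd : p ^ n ∣ p ^ 1 := by
    simpa [hmin, hdeg] using minpoly.degree_dvd (IsIntegral.of_finite K b)
  have hb : b ^ p ^ n = algebraMap K K' y := by
    simpa [hmin, sub_eq_zero] using minpoly.aeval K b
  obtain hn | hn := Nat.le_one_iff_eq_zero_or_eq_one.mp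
    ((Nat.pow_dvd_pow_iff_le_right hp.one_lt).mp hdvd)
  · exact ⟨y ^ p, by simp_all⟩
  · exact ⟨y, by simpa [hn] using hb⟩

theorem isDomain_tensorProduct_of_pow_eq_of_forall_pow_ne {p : ℕ} (hp : p.Prime)
    {K K' F : Type*} [Field K] [CommRing K'] [Field F] [Algebra K K'] [Algebra K F]
    (hdeg : Module.finrank K K' = p) {c : K} {a : K'} (ha : a ^ p = algebraMap K K' c)
    (hc : ∀ b : F, b ^ p ≠ algebraMap K F c) :
    IsDomain (F ⊗[K] K') := by
  have : FiniteDimensional K K' := Module.finite_of_finrank_pos (hdeg ▸ hp.pos)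
  let q : F[X] := X ^ p - C (algebraMap K F c)
  have : Fact (Irreducible q) := ⟨X_pow_sub_C_irreducible_of_prime hp hc⟩
  have hq : aeval ((1 : F) ⊗ₜ[K] a) q = 0 := by
    simp [q, Algebra.TensorProduct.tmul_pow, ha, Algebra.algebraMap_eq_smul_one,
      Algebra.TensorProduct.one_def]
  let ψ : AdjoinRoot q →ₐ[F] F ⊗[K] K' := AdjoinRoot.liftAlgHom q (Algebra.ofId F _) _ hq
  have : Nontrivial (F ⊗[K] K') := Module.nontrivial_of_finrank_pos (R := F) <| by
    rw [Module.finrank_baseChange, hdeg]; exact hp.pos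
  -- `ψ` is injective since `AdjoinRoot q` is a field, and both sides have dimension `p` over `F`.
  have hψ : Function.Bijective ψ := by
    refine ⟨ψ.toRingHom.injective, ?_⟩
    let pb := AdjoinRoot.powerBasis (K := F) (f := q) (X_pow_sub_C_ne_zero hp.pos _)
    have : FiniteDimensional F (AdjoinRoot q) := pb.finite
    refine (LinearMap.injective_iff_surjective_of_finrank_eq_finrank (f := ψ.toLinearMap) ?_).mp
      ψ.toRingHom.injective
    rw [pb.finrank, AdjoinRoot.powerBasis_dim, natDegree_X_pow_sub_C, Module.finrank_baseChange,
      hdeg]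
  exact (AlgEquiv.ofBijective ψ hψ).symm.toRingEquiv.toMulEquiv.isDomain _

theorem isDomain_tensorProduct_of_injective {K A F K' : Type*} [CommRing K] [CommRing A]
    [CommRing F] [CommRing K'] [Algebra K A] [Algebra K F] [Algebra K K'] [Module.Flat K K']
    [IsDomain (F ⊗[K] K')]
    (j : A →ₐ[K] F) (hj : Function.Injective j) :
    IsDomain (A ⊗[K] K') :=
  Function.Injective.isDomain (Algebra.TensorProduct.map j (AlgHom.id K K')).toRingHom
    (Module.Flat.rTensor_preserves_injective_linearMap j.toLinearMap hj)

namespace AlgebraicGeometry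

open Limits

universe u

theorem Scheme.toSpecΓ_SpecMap_ΓSpecIso_inv_appTop {X : Scheme.{u}} {R : CommRingCat.{u}}
    (f : X ⟶ Spec R) :
    X.toSpecΓ ≫ Spec.map ((Scheme.ΓSpecIso R).inv ≫ f.appTop) = f := by
  rw [Spec.map_comp, ← Scheme.toSpecΓ_naturality_assoc, ← SpecMap_ΓSpecIso_hom, ← Spec.map_comp,
    Iso.inv_hom_id, Spec.map_id, Category.comp_id]

theorem isIntegral_pullback_of_isAffine {K K' : Type u} [CommRing K] [CommRing K'] [Algebra K K']
    {V : Scheme.{u}} [IsAffine V] (h : V ⟶ Spec (.of K)) [Algebra K Γ(V, ⊤)]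
    (hh : CommRingCat.ofHom (algebraMap K Γ(V, ⊤)) = (Scheme.ΓSpecIso _).inv ≫ h.appTop)
    [IsDomain (Γ(V, ⊤) ⊗[K] K')] :
    IsIntegral (pullback h (Spec.map (CommRingCat.ofHom (algebraMap K K')))) := by
  have hV : V.isoSpec.inv ≫ h = Spec.map (CommRingCat.ofHom (algebraMap K Γ(V, ⊤))) := by
    rw [hh, Iso.inv_comp_eq]
    exact (Scheme.toSpecΓ_SpecMap_ΓSpecIso_inv_appTop h).symm
  exact IsIntegral.of_isIso ((pullbackSpecIso K Γ(V, ⊤) K').inv ≫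
    pullback.map _ _ _ _ V.isoSpec.inv (𝟙 _) (𝟙 _) (by simp [hV]) (by simp))

theorem isIntegral_of_openCover {P : Scheme} [Nonempty P] (𝒱 : P.OpenCover)
    [∀ i, IsIntegral (𝒱.X i)] (h𝒱 : ∀ i j, (Set.range (𝒱.f i) ∩ Set.range (𝒱.f j)).Nonempty) :
    IsIntegral P := by
  have : ∀ y : P, _root_.IsReduced (P.presheaf.stalk y) := by
    intro y
    obtain ⟨z, hz⟩ := 𝒱.covers y
    rw [← hz]
    exact isReduced_of_injective _
      (asIso ((𝒱.f (𝒱.idx y)).stalkMap z)).commRingCatIsoToRingEquiv.injective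
  have : IsReduced P := isReduced_of_isReduced_stalk P
  have : PreirreducibleSpace P := by
    refine PreirreducibleSpace.of_isOpenCover (U := fun i ↦ (𝒱.f i).opensRange) ?_
      𝒱.isOpenCover_opensRange fun i ↦ Subtype.preirreducibleSpace ?_
    · intro i j _
      simpa [Function.onFun, ← TopologicalSpace.Opens.coe_disjoint,
        Set.not_disjoint_iff_nonempty_inter] using h𝒱 i j
    · simpa using ((IrreducibleSpace.isIrreducible_univ (𝒱.X i)).image _
        (𝒱.f i).continuous.continuousOn).isPreirreducible
  have : IrreducibleSpace P := ⟨inferInstance⟩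
  exact isIntegral_of_irreducibleSpace_of_isReduced P

theorem Scheme.exists_germ_genericPoint_eq_of_forall_mem_range_stalk {X : Scheme.{u}}
    [IsIntegral X] {b : X.functionField}
    (hb : ∀ x : X, b ∈ (algebraMap (X.presheaf.stalk x) X.functionField).range) :
    ∃ s : Γ(X, ⊤), X.presheaf.germ ⊤ (genericPoint X) trivial s = b := by
  have hsec : ∀ x : X, ∃ (W : X.Opens) (_ : x ∈ W) (hηW : genericPoint X ∈ W) (t : Γ(X, W)),
      X.presheaf.germ W (genericPoint X) hηW t = b := by
    intro x
    obtain ⟨s, rfl⟩ := hb x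
    obtain ⟨W, hxW, t, rfl⟩ := X.presheaf.exists_germ_eq s
    have : Nonempty W := ⟨⟨x, hxW⟩⟩
    exact ⟨W, hxW, _, t, (Scheme.algebraMap_germ_eq_germToFunctionField X hxW t).symm⟩
  choose W hxW hηW t ht using hsec
  have hcompat : TopCat.Presheaf.IsCompatible X.presheaf W t := by
    intro i j
    apply germ_injective_of_isIntegral X (genericPoint X)
      (show genericPoint X ∈ W i ⊓ W j from ⟨hηW i, hηW j⟩)
    simp only [TopCat.Presheaf.germ_res_apply, ht]
  obtain ⟨s, hs, -⟩ := X.sheaf.existsUnique_gluing' W ⊤ (fun _ ↦ homOfLE le_top)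
    (fun y _ ↦ TopologicalSpace.Opens.mem_iSup.mpr ⟨y, hxW y⟩) t hcompat
  obtain ⟨x⟩ := (inferInstance : Nonempty X)
  refine ⟨s, ?_⟩
  rw [← ht x, ← hs x]
  exact (TopCat.Presheaf.germ_res_apply _ _ _ _ _).symm

theorem Scheme.exists_germ_genericPoint_eq_of_isIntegralElem {X : Scheme.{u}} [IsIntegral X]
    (hX : ∀ x : X, IsIntegrallyClosed (X.presheaf.stalk x)) {b : X.functionField}
    (hb : (X.presheaf.germ ⊤ (genericPoint X) trivial).hom.IsIntegralElem b) :
    ∃ s : Γ(X, ⊤), X.presheaf.germ ⊤ (genericPoint X) trivial s = b := by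
  refine exists_germ_genericPoint_eq_of_forall_mem_range_stalk fun x ↦ ?_
  have : IsIntegrallyClosed (X.presheaf.stalk x) := hX x
  have hfactor : (X.presheaf.germ ⊤ (genericPoint X) trivial).hom =
      (algebraMap (X.presheaf.stalk x) X.functionField).comp (X.presheaf.germ ⊤ x trivial).hom := by
    rw [RingHom.algebraMap_toAlgebra, ← CommRingCat.hom_comp]
    exact congrArg CommRingCat.Hom.hom (X.presheaf.germ_stalkSpecializes _ _).symm
  rw [hfactor] at hb
  exact IsIntegrallyClosed.isIntegral_iff.mp hb.of_comp

theorem Scheme.pow_ne_germ_of_forall_pow_ne {X : Scheme.{u}} [IsIntegral X]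
    (hX : ∀ x : X, IsIntegrallyClosed (X.presheaf.stalk x)) {R : CommRingCat.{u}}
    (φ : R ⟶ Γ(X, ⊤)) (hφ : Function.Bijective φ) {n : ℕ} (hn : n ≠ 0) {c : R}
    (hc : ∀ r : R, r ^ n ≠ c) (b : X.functionField) :
    b ^ n ≠ X.presheaf.germ ⊤ (genericPoint X) trivial (φ c) := by
  intro hb
  have hint : (X.presheaf.germ ⊤ (genericPoint X) trivial).hom.IsIntegralElem b :=
    ⟨Polynomial.X ^ n - C (φ c), monic_X_pow_sub_C _ hn, by simp [hb]⟩
  obtain ⟨s, rfl⟩ := exists_germ_genericPoint_eq_of_isIntegralElem hX hint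
  obtain ⟨r, rfl⟩ := hφ.2 s
  refine hc r (hφ.1 (germ_injective_of_isIntegral X (U := ⊤) (genericPoint X) trivial ?_))
  rwa [map_pow, map_pow]

section

variable {K K' : Type u} [Field K] [CommRing K'] [Algebra K K']
  {Y : Scheme.{u}} [IsIntegral Y] (h : Y ⟶ Spec (.of K)) [Algebra K Y.functionField]
  [IsDomain (Y.functionField ⊗[K] K')]

theorem isIntegral_pullback_of_isAffineOpen
    (hY : ∀ k : K, algebraMap K Y.functionField k =
      Y.presheaf.germ ⊤ (genericPoint Y) trivial (h.appTop ((Scheme.ΓSpecIso _).inv k)))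
    {U : Y.Opens} (hU : IsAffineOpen U) [Nonempty U] :
    IsIntegral (pullback (U.ι ≫ h) (Spec.map (CommRingCat.ofHom (algebraMap K K')))) := by
  have : IsAffine U := hU
  let φ : CommRingCat.of K ⟶ Γ(U, ⊤) := (Scheme.ΓSpecIso _).inv ≫ (U.ι ≫ h).appTop
  let : Algebra K Γ(U, ⊤) := φ.hom.toAlgebra
  have hres : U.ι.appTop ≫ U.topIso.hom ≫ Y.germToFunctionField U =
      Y.presheaf.germ ⊤ (genericPoint Y) trivial := by
    rw [Scheme.Opens.ι_appTop]
    change Y.presheaf.map _ ≫ Y.presheaf.map _ ≫ Y.presheaf.germ _ _ _ = _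
    rw [Iso.op_hom, eqToIso.hom, TopCat.Presheaf.germ_res, TopCat.Presheaf.germ_res]
  let j : Γ(U, ⊤) →ₐ[K] Y.functionField :=
    { toRingHom := (U.topIso.hom ≫ Y.germToFunctionField U).hom
      commutes' := fun k ↦ by
        rw [hY, ← hres]
        rfl }
  have : IsDomain (Γ(U, ⊤) ⊗[K] K') := isDomain_tensorProduct_of_injective j <|
    (Y.germToFunctionField_injective U).comp (ConcreteCategory.bijective_of_isIso _).injective
  exact isIntegral_pullback_of_isAffine _ rfl

theorem isIntegral_pullback_of_isDomain_functionField_tensorProduct [Nontrivial K']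
    (hY : ∀ k : K, algebraMap K Y.functionField k =
      Y.presheaf.germ ⊤ (genericPoint Y) trivial (h.appTop ((Scheme.ΓSpecIso _).inv k))) :
    IsIntegral (pullback h (Spec.map (CommRingCat.ofHom (algebraMap K K')))) := by
  set g := Spec.map (CommRingCat.ofHom (algebraMap K K'))
  choose U hU hyU using fun y : Y ↦ exists_isAffineOpen_mem_and_subset (x := y) (U := ⊤) trivial
  have hcov : TopologicalSpace.IsOpenCover U :=
    .mk (eq_top_iff.mpr fun y _ ↦ TopologicalSpace.Opens.mem_iSup.mpr ⟨y, (hyU y).1⟩)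
  let 𝒱 := Scheme.Pullback.openCoverOfLeft (Y.openCoverOfIsOpenCover U hcov) h g
  have : Surjective g := ⟨fun _ ↦ ⟨Classical.arbitrary _, Subsingleton.elim _ _⟩⟩
  have hfst : Surjective (pullback.fst h g) := inferInstance
  obtain ⟨z, -⟩ := hfst.surj (Classical.arbitrary Y)
  have : Nonempty ↥(pullback h g) := ⟨z⟩
  have : ∀ y, IsIntegral (𝒱.X y) := fun y ↦
    have : Nonempty (U y) := ⟨⟨y, (hyU y).1⟩⟩
    isIntegral_pullback_of_isAffineOpen h hY (hU y)
  have hrange : ∀ y : Y, Set.range (𝒱.f y) = pullback.fst h g ⁻¹' U y := fun y ↦ by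
    refine (Scheme.Pullback.range_map _ g h g (U y).ι (𝟙 _) (𝟙 _) (Category.comp_id _)
      (by simp)).trans ?_
    simp
  refine isIntegral_of_openCover 𝒱 fun (i j : Y) ↦ ?_
  rw [hrange, hrange, ← Set.preimage_inter]
  exact (nonempty_preirreducible_inter (U i).2 (U j).2 ⟨i, (hyU i).1⟩ ⟨j, (hyU j).1⟩).preimage
    hfst.surj

end

end AlgebraicGeometry

theorem stmt_1_general (p : ℕ) [Fact p.Prime] (K K' : Type) [Field K] [Field K'] [Algebra K K']
    [CharP K p] [IsPurelyInseparable K K'] (hdeg : Module.finrank K K' = p)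
    (X : Scheme) (f : X ⟶ Spec (CommRingCat.of K)) [IsIntegral X]
    (hnormal : ∀ x : X, IsIntegrallyClosed (X.presheaf.stalk x))
    (hglobal : Function.Bijective (f.app ⊤)) :
    IsIntegral (Limits.pullback f (Spec.map (CommRingCat.ofHom (algebraMap K K')))) := by
  have hp : p.Prime := Fact.out
  have : CharP K' p := charP_of_injective_algebraMap (algebraMap K K').injective p
  obtain ⟨a, ha⟩ : ∃ a : K', a ∉ Set.range (algebraMap K K') := not_forall.mp fun hs ↦
    hp.one_lt.ne' (hdeg ▸ Module.finrank_of_bijective_algebraMap ⟨(algebraMap K K').injective, hs⟩)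
  obtain ⟨c, hc⟩ := IsPurelyInseparable.exists_pow_eq_algebraMap_of_finrank_eq_prime hdeg a
  have hroot : ∀ k : K, k ^ p ≠ c := fun k hk ↦
    ha ⟨k, frobenius_inj K' p (by simp [frobenius_def, hc, ← hk])⟩
  let φ : CommRingCat.of K ⟶ Γ(X, ⊤) := (Scheme.ΓSpecIso _).inv ≫ f.appTop
  have hφ : Function.Bijective φ :=
    hglobal.comp (ConcreteCategory.bijective_of_isIso (Scheme.ΓSpecIso _).inv)
  let : Algebra K X.functionField := (φ ≫ X.presheaf.germ ⊤ (genericPoint X) trivial).hom.toAlgebra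
  have : IsDomain (X.functionField ⊗[K] K') := isDomain_tensorProduct_of_pow_eq_of_forall_pow_ne hp
    hdeg hc (X.pow_ne_germ_of_forall_pow_ne hnormal φ hφ hp.ne_zero hroot)
  exact isIntegral_pullback_of_isDomain_functionField_tensorProduct f fun _ ↦ rfl

/-- Let `X` be a proper normal integral scheme over a field `K` of characteristic `p > 0`
with `H⁰(X, O_X) = K`, and let `K ⊂ K'` be a purely inseparable field extension of
degree `p`.  Then `X ⊗_K K'` is an integral scheme. -/
theorem stmt_1 (p : ℕ) [Fact p.Prime] (K K' : Type) [Field K] [Field K'] [Algebra K K']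
    [CharP K p] [IsPurelyInseparable K K'] (hdeg : Module.finrank K K' = p)
    (X : Scheme) (f : X ⟶ Spec (CommRingCat.of K)) [IsProper f] [IsIntegral X]
    (hnormal : ∀ x : X, IsIntegrallyClosed (X.presheaf.stalk x))
    (hglobal : Function.Bijective (f.app ⊤)) :
    IsIntegral (Limits.pullback f (Spec.map (CommRingCat.ofHom (algebraMap K K')))) :=
  stmt_1_general p K K' hdeg X f hnormal hglobal
end

section
/- Let R be a local Noetherian ring of characteristic p > 0, f ∈ R, r ≥ 1 an integer, and A = R[T]/(T^{p^r} - f^p). Then the embedding dimension of A equals the embedding dimension of R plus one. -/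
/-!
Every element of `A = R[T]/(T^{p^r} - f^p)` has its `p^r`-th power in `R` (Frobenius), so `A` is
local because `R` is. Let `q̄` be an irreducible factor of `T^{p^{r-1}} - f̄` over the residue
field and `q` a lift; then `M = 𝔪R[T] + (q)` is maximal and contains `g = T^{p^{r-1}} - f`, so the
relation `T^{p^r} - f^p = g^p` lies in `M²`. Hence `𝔪_A/𝔪_A² ≅ M/M²`, which has basis `q`
together with minimal generators `c₁, …, cₙ` of `𝔪`: reducing a syzygy `d₀ q + ∑ dᵢ cᵢ = 0`
modulo `𝔪` gives `d₀ ∈ 𝔪R[T]`, and writing `d₀ = ∑ uᵢ cᵢ` turns it into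
`∑ (dᵢ + uᵢ q) cᵢ = 0`, so `dᵢ ≡ -uᵢ q` modulo `𝔪R[T]` by independence of the `cᵢ` modulo `𝔪²`.
-/

open Polynomial

/-- The embedding dimension of a local ring: `dim_k (m/m²)`. -/
noncomputable def embDim (R : Type) [CommRing R] [IsLocalRing R] : ℕ :=
  Module.finrank (IsLocalRing.ResidueField R) (IsLocalRing.CotangentSpace R)

open IsLocalRing Module

section Frobenius

variable {S A : Type*} [CommRing S] [CommRing A] [Algebra S A] (p r : ℕ) [Fact p.Prime]
  [CharP A p]

lemma exists_pow_char_pow_eq_algebraMap_of_adjoin_eq_top {x : A}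
    (hx : Algebra.adjoin S {x} = ⊤) {u : S} (hu : x ^ p ^ r = algebraMap S A u) (a : A) :
    ∃ c : S, a ^ p ^ r = algebraMap S A c := by
  have ha : a ∈ Algebra.adjoin S {x} := hx ▸ Algebra.mem_top
  induction ha using Algebra.adjoin_induction with
  | mem y hy => exact ⟨u, by rwa [Set.mem_singleton_iff.mp hy]⟩
  | algebraMap c => exact ⟨c ^ p ^ r, (map_pow _ _ _).symm⟩
  | add y z _ _ hy hz =>
    obtain ⟨cy, hcy⟩ := hy
    obtain ⟨cz, hcz⟩ := hz
    exact ⟨cy + cz, by rw [add_pow_char_pow, hcy, hcz, map_add]⟩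
  | mul y z _ _ hy hz =>
    obtain ⟨cy, hcy⟩ := hy
    obtain ⟨cz, hcz⟩ := hz
    exact ⟨cy * cz, by rw [mul_pow, hcy, hcz, map_mul]⟩

lemma isLocalRing_of_forall_pow_char_pow_mem_range [IsLocalRing S] [Nontrivial A]
    (h : ∀ a : A, ∃ c : S, a ^ p ^ r = algebraMap S A c) : IsLocalRing A := by
  have hpr : p ^ r ≠ 0 := pow_ne_zero r (Fact.out : p.Prime).ne_zero
  have isUnit_of_pow {a : A} {c : S} (hac : a ^ p ^ r = algebraMap S A c) (hc : IsUnit c) :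
      IsUnit a :=
    (isUnit_pow_iff hpr).mp (hac ▸ hc.map _)
  refine .of_isUnit_or_isUnit_one_sub_self fun a => ?_
  obtain ⟨c, hc⟩ := h a
  have hc' : (1 - a) ^ p ^ r = algebraMap S A (1 - c) := by
    rw [sub_pow_char_pow, one_pow, hc, map_sub, map_one]
  exact (isUnit_or_isUnit_one_sub_self c).imp (isUnit_of_pow hc) (isUnit_of_pow hc')

end Frobenius

/-- For `g i ∈ I` this says that the images of the `g i` in `I / I ^ 2` are linearly
independent over `B ⧸ I`. -/
def Ideal.IndependentModSq {B ι : Type*} [CommRing B] [Fintype ι] (I : Ideal B) (g : ι → B) :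
    Prop :=
  ∀ b : ι → B, ∑ i, b i * g i ∈ I ^ 2 → ∀ i, b i ∈ I

namespace Ideal.IndependentModSq

variable {B ι : Type*} [CommRing B] [Fintype ι]

lemma of_syzygy {I : Ideal B} {g : ι → B} (hI : I = span (Set.range g))
    (hsyz : ∀ d : ι → B, ∑ i, d i * g i = 0 → ∀ i, d i ∈ I) : I.IndependentModSq g := by
  intro b hb
  rw [pow_two, ← smul_eq_mul, hI, Submodule.mem_ideal_smul_span_iff_exists_sum, ← hI] at hb
  obtain ⟨y, hyI, hy⟩ := hb
  rw [Finsupp.sum_fintype _ _ (by simp)] at hy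
  have hd : ∑ i, (b i - y i) * g i = 0 := by
    simp only [smul_eq_mul] at hy
    simp only [sub_mul, Finset.sum_sub_distrib, hy, sub_self]
  intro i
  simpa using I.add_mem (hsyz _ hd i) (hyI i)

end Ideal.IndependentModSq

namespace IsLocalRing

variable {A ι : Type*} [CommRing A] [IsLocalRing A]

lemma span_range_toCotangent_eq_top_iff [IsNoetherianRing A] {g : ι → A}
    (hg : ∀ i, g i ∈ maximalIdeal A) :
    Submodule.span (ResidueField A)
        (Set.range fun i => (maximalIdeal A).toCotangent ⟨g i, hg i⟩) = ⊤ ↔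
      maximalIdeal A = Ideal.span (Set.range g) := by
  rw [Set.range_comp' (maximalIdeal A).toCotangent, CotangentSpace.span_image_eq_top_iff,
    ← (Submodule.map_injective_of_injective (maximalIdeal A).injective_subtype).eq_iff,
    Submodule.map_span, Submodule.map_top, Submodule.range_subtype, ← Set.range_comp, eq_comm]
  rfl

variable [Fintype ι]

lemma linearIndependent_toCotangent_iff {g : ι → A} (hg : ∀ i, g i ∈ maximalIdeal A) :
    LinearIndependent (ResidueField A) (fun i => (maximalIdeal A).toCotangent ⟨g i, hg i⟩) ↔
      (maximalIdeal A).IndependentModSq g := by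
  have hsum (b : ι → A) :
      ∑ i, residue A (b i) • (maximalIdeal A).toCotangent ⟨g i, hg i⟩ =
        (maximalIdeal A).toCotangent
          ⟨∑ i, b i * g i, sum_mem fun i _ => Ideal.mul_mem_left _ _ (hg i)⟩ := by
    simp only [← ResidueField.algebraMap_eq, algebraMap_smul, ← map_smul, ← map_sum]
    congr 1
    ext
    simp
  rw [Fintype.linearIndependent_iff]
  constructor
  · intro h b hb i
    refine (residue_eq_zero_iff _).mp (h (fun i => residue A (b i)) ?_ i)
    rw [hsum, Ideal.toCotangent_eq_zero]
    exact hb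
  · intro h a ha i
    choose b hb using fun i => residue_surjective (a i)
    simp only [← hb, hsum, Ideal.toCotangent_eq_zero] at ha ⊢
    exact (residue_eq_zero_iff _).mpr (h b ha i)

lemma finrank_cotangentSpace_eq_card [IsNoetherianRing A] {g : ι → A}
    (hspan : maximalIdeal A = Ideal.span (Set.range g))
    (hind : (maximalIdeal A).IndependentModSq g) :
    finrank (ResidueField A) (CotangentSpace A) = Fintype.card ι := by
  have hg (i : ι) : g i ∈ maximalIdeal A := hspan ▸ Ideal.subset_span ⟨i, rfl⟩
  exact finrank_eq_card_basis <| .mk ((linearIndependent_toCotangent_iff hg).mpr hind)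
    ((span_range_toCotangent_eq_top_iff hg).mpr hspan).ge

variable (A) in
lemma exists_span_eq_maximalIdeal_independentModSq [IsNoetherianRing A] :
    ∃ c : Fin (finrank (ResidueField A) (CotangentSpace A)) → A,
      maximalIdeal A = Ideal.span (Set.range c) ∧ (maximalIdeal A).IndependentModSq c := by
  let b := Module.finBasis (ResidueField A) (CotangentSpace A)
  choose c hc using fun i => (maximalIdeal A).toCotangent_surjective (b i)
  have hb : (fun i => (maximalIdeal A).toCotangent ⟨(c i : A), (c i).2⟩) = b := funext hc
  refine ⟨fun i => c i, (span_range_toCotangent_eq_top_iff fun i => (c i).2).mp ?_,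
    (linearIndependent_toCotangent_iff fun i => (c i).2).mp ?_⟩
  · rw [hb, b.span_eq]
  · rw [hb]
    exact b.linearIndependent

end IsLocalRing

section Surjective

variable {B A : Type*} [CommRing B] [CommRing A] {π : B →+* A} (hπ : Function.Surjective π)
  {M : Ideal B}
include hπ

lemma Ideal.IndependentModSq.map {ι : Type*} [Fintype ι] (hker : RingHom.ker π ≤ M ^ 2)
    {g : ι → B} (h : M.IndependentModSq g) : (M.map π).IndependentModSq fun i => π (g i) := by
  intro b hb i
  choose b' hb' using fun i => hπ (b i)
  have hsq : ∑ i, b' i * g i ∈ M ^ 2 := by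
    rw [← sup_eq_left.mpr hker, ← Ideal.comap_map_of_surjective' π hπ, Ideal.mem_comap,
      Ideal.map_pow]
    simpa [hb'] using hb
  rw [← hb' i]
  exact Ideal.mem_map_of_mem _ (h b' hsq i)

lemma IsLocalRing.maximalIdeal_eq_map_of_surjective [IsLocalRing A] [M.IsMaximal]
    (hker : RingHom.ker π ≤ M) : maximalIdeal A = M.map π := by
  refine (eq_maximalIdeal ?_).symm
  refine (Ideal.map_eq_top_or_isMaximal_of_surjective π hπ ‹_›).resolve_left fun htop => ?_
  have hM := Ideal.comap_map_of_surjective' π hπ M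
  rw [htop, Ideal.comap_top, sup_eq_left.mpr hker] at hM
  exact Ideal.IsMaximal.ne_top ‹_› hM.symm

end Surjective

lemma Ideal.IndependentModSq.map_C {R ι : Type*} [CommRing R] [Fintype ι] {I : Ideal R}
    {c : ι → R} (h : I.IndependentModSq c) :
    (I.map (C : R →+* R[X])).IndependentModSq fun i => C (c i) := by
  intro v hv i
  rw [← Ideal.map_pow, Ideal.mem_map_C_iff] at hv
  rw [Ideal.mem_map_C_iff]
  intro j
  refine h (fun i => (v i).coeff j) ?_ i
  simpa [finsetSum_coeff, coeff_mul_C] using hv j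

namespace Polynomial

variable {R ι : Type*} [CommRing R] [IsLocalRing R]

/-- The ideal `𝔪 R[X] + (q)` (see `residueDvdIdeal_eq_span`). -/
noncomputable def residueDvdIdeal (q : R[X]) : Ideal R[X] :=
  Ideal.comap (mapRingHom (residue R)) (Ideal.span {q.map (residue R)})

lemma mem_residueDvdIdeal {q t : R[X]} :
    t ∈ residueDvdIdeal q ↔ q.map (residue R) ∣ t.map (residue R) :=
  Ideal.mem_span_singleton

lemma isMaximal_residueDvdIdeal {q : R[X]} (hq : Irreducible (q.map (residue R))) :
    (residueDvdIdeal q).IsMaximal :=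
  have := PrincipalIdealRing.isMaximal_of_irreducible hq
  Ideal.comap_isMaximal_of_surjective _ (map_surjective _ residue_surjective)

lemma ker_mapRingHom_residue :
    RingHom.ker (mapRingHom (residue R)) = (maximalIdeal R).map C := by
  rw [ker_mapRingHom, ker_residue]

lemma residueDvdIdeal_eq_span {c : ι → R} (hc : maximalIdeal R = Ideal.span (Set.range c))
    (q : R[X]) :
    residueDvdIdeal q = Ideal.span (Set.range fun o : Option ι => o.elim q fun i => C (c i)) := by
  have hspan : Ideal.span {q.map (residue R)} = (Ideal.span {q}).map (mapRingHom (residue R)) := by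
    rw [Ideal.map_span, Set.image_singleton, coe_mapRingHom]
  rw [residueDvdIdeal, hspan,
    Ideal.comap_map_of_surjective' _ (map_surjective _ residue_surjective), ker_mapRingHom_residue,
    hc, Ideal.map_span, Option.range_elim, Set.insert_eq, Ideal.span_union, ← Set.range_comp]
  rfl

variable [Fintype ι]

lemma mem_residueDvdIdeal_of_syzygy {c : ι → R} (hc : maximalIdeal R = Ideal.span (Set.range c))
    (hind : (maximalIdeal R).IndependentModSq c) {q : R[X]} (hq : q.map (residue R) ≠ 0)
    (d : Option ι → R[X]) (hd : ∑ o, d o * o.elim q (fun i => C (c i)) = 0) (o : Option ι) :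
    d o ∈ residueDvdIdeal q := by
  simp only [Fintype.sum_option, Option.elim] at hd
  have hCc (i : ι) : (C (c i)).map (residue R) = 0 := by
    rw [map_C, (residue_eq_zero_iff _).mpr (hc ▸ Ideal.subset_span ⟨i, rfl⟩), map_zero]
  have hnone : (d none).map (residue R) = 0 := by
    have hd' := congrArg (Polynomial.map (residue R)) hd
    simp only [Polynomial.map_add, Polynomial.map_mul, Polynomial.map_sum, hCc, mul_zero,
      Finset.sum_const_zero, add_zero, Polynomial.map_zero] at hd'
    exact (mul_eq_zero.mp hd').resolve_right hq
  have hnone' : d none ∈ (maximalIdeal R).map C := by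
    rw [← ker_mapRingHom_residue]
    exact hnone
  rw [hc, Ideal.map_span, ← Set.range_comp, Ideal.mem_span_range_iff_exists_fun] at hnone'
  obtain ⟨u, hu⟩ := hnone'
  have hsq : ∑ i, (d (some i) + u i * q) * C (c i) ∈ ((maximalIdeal R).map C) ^ 2 := by
    have hzero : ∑ i, (d (some i) + u i * q) * C (c i) = 0 := by
      rw [← hd, ← hu]
      simp only [add_mul, Finset.sum_add_distrib, Finset.sum_mul, Function.comp_apply]
      rw [add_comm]
      exact congrArg (· + _) (Finset.sum_congr rfl fun i _ => by ring)
    rw [hzero]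
    exact Ideal.zero_mem _
  rcases o with _ | i
  · rw [mem_residueDvdIdeal, hnone]
    exact dvd_zero _
  · have hi := hind.map_C _ hsq i
    rw [← ker_mapRingHom_residue, RingHom.mem_ker, coe_mapRingHom, Polynomial.map_add,
      Polynomial.map_mul] at hi
    rw [mem_residueDvdIdeal, eq_neg_of_add_eq_zero_left hi]
    exact (dvd_mul_left _ _).neg_right

lemma independentModSq_residueDvdIdeal {c : ι → R}
    (hc : maximalIdeal R = Ideal.span (Set.range c)) (hind : (maximalIdeal R).IndependentModSq c)
    {q : R[X]} (hq : q.map (residue R) ≠ 0) :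
    (residueDvdIdeal q).IndependentModSq fun o : Option ι => o.elim q fun i => C (c i) :=
  .of_syzygy (residueDvdIdeal_eq_span hc q) (mem_residueDvdIdeal_of_syzygy hc hind hq)

lemma exists_irreducible_mem_residueDvdIdeal {g : R[X]} (hg : 0 < (g.map (residue R)).natDegree) :
    ∃ q : R[X], Irreducible (q.map (residue R)) ∧ g ∈ residueDvdIdeal q := by
  obtain ⟨q', hq', hdvd⟩ := exists_irreducible_of_natDegree_pos hg
  obtain ⟨q, rfl⟩ := map_surjective _ residue_surjective q'
  exact ⟨q, hq', mem_residueDvdIdeal.mpr hdvd⟩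

end Polynomial

namespace AdjoinRoot

variable {R : Type*} [CommRing R]

lemma nontrivial_of_monic [Nontrivial R] {H : R[X]} (hm : H.Monic) (hd : H.natDegree ≠ 0) :
    Nontrivial (AdjoinRoot H) :=
  Ideal.Quotient.nontrivial_iff.mpr fun htop =>
    hd (by rw [hm.isUnit_iff.mp (Ideal.span_singleton_eq_top.mp htop), natDegree_one])

lemma isLocalRing_X_pow_char_pow_sub_C [IsLocalRing R] (p r : ℕ) [Fact p.Prime] [CharP R p]
    (a : R) : IsLocalRing (AdjoinRoot (X ^ p ^ r - C a)) := by
  have hpr : p ^ r ≠ 0 := pow_ne_zero r (Fact.out : p.Prime).ne_zero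
  have := nontrivial_of_monic (monic_X_pow_sub_C a hpr) (by rwa [natDegree_X_pow_sub_C])
  have : CharP (AdjoinRoot (X ^ p ^ r - C a)) p :=
    (CharP.charP_iff_prime_eq_zero Fact.out).mpr <| by
      rw [← map_natCast (algebraMap R _), CharP.cast_eq_zero, map_zero]
  have hroot : root (X ^ p ^ r - C a) ^ p ^ r = algebraMap R _ a := by
    have h := mk_self (f := X ^ p ^ r - C a)
    rwa [map_sub, map_pow, mk_X, mk_C, sub_eq_zero] at h
  exact isLocalRing_of_forall_pow_char_pow_mem_range p r
    (exists_pow_char_pow_eq_algebraMap_of_adjoin_eq_top p r adjoinRoot_eq_top hroot)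

lemma finrank_cotangentSpace_of_mem_residueDvdIdeal_sq [IsLocalRing R] [IsNoetherianRing R]
    {q H : R[X]} (hq : Irreducible (q.map (residue R))) (hH : H ∈ residueDvdIdeal q ^ 2)
    [IsLocalRing (AdjoinRoot H)] :
    finrank (ResidueField (AdjoinRoot H)) (CotangentSpace (AdjoinRoot H)) =
      finrank (ResidueField R) (CotangentSpace R) + 1 := by
  obtain ⟨c, hcspan, hcind⟩ := exists_span_eq_maximalIdeal_independentModSq R
  have := isMaximal_residueDvdIdeal hq
  have hker : RingHom.ker (mk H) ≤ residueDvdIdeal q ^ 2 := by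
    intro t ht
    obtain ⟨s, rfl⟩ := mk_eq_zero.mp ht
    exact Ideal.mul_mem_right _ _ hH
  have hmax := maximalIdeal_eq_map_of_surjective mk_surjective
    (hker.trans (Ideal.pow_le_self two_ne_zero))
  rw [finrank_cotangentSpace_eq_card
    (g := fun o : Option (Fin _) => mk H (o.elim q fun i => C (c i))), Fintype.card_option,
    Fintype.card_fin]
  · rw [hmax, residueDvdIdeal_eq_span hcspan, Ideal.map_span, ← Set.range_comp]
    rfl
  · rw [hmax]
    exact (independentModSq_residueDvdIdeal hcspan hcind hq.ne_zero).map mk_surjective hker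

end AdjoinRoot

/-- Let `R` be a local Noetherian ring of characteristic `p > 0`, `f ∈ R`, `r ≥ 1`, and
`A = R[T]/(T^{p^r} - f^p)`.  Then `A` is local and `edim(A) = edim(R) + 1`. -/
theorem stmt_4 (p r : ℕ) [Fact p.Prime] (hr : 1 ≤ r) (R : Type) [CommRing R]
    [IsLocalRing R] [IsNoetherianRing R] [CharP R p] (f : R) :
    ∃ h : IsLocalRing (AdjoinRoot ((X : R[X]) ^ p ^ r - C (f ^ p))),
      @embDim (AdjoinRoot ((X : R[X]) ^ p ^ r - C (f ^ p))) _ h = embDim R + 1 := by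
  obtain ⟨n, rfl⟩ : ∃ n, r = n + 1 := ⟨r - 1, by omega⟩
  have hp : p.Prime := Fact.out
  have hloc := AdjoinRoot.isLocalRing_X_pow_char_pow_sub_C p (n + 1) (f ^ p)
  refine ⟨hloc, ?_⟩
  obtain ⟨q, hq, hgq⟩ := exists_irreducible_mem_residueDvdIdeal (g := X ^ p ^ n - C f) <| by
    rw [Polynomial.map_sub, Polynomial.map_pow, map_X, map_C, natDegree_X_pow_sub_C]
    exact pow_pos hp.pos n
  have hH : (X : R[X]) ^ p ^ (n + 1) - C (f ^ p) = (X ^ p ^ n - C f) ^ p := by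
    rw [sub_pow_char, ← pow_mul, ← pow_succ, ← C_pow]
  exact AdjoinRoot.finrank_cotangentSpace_of_mem_residueDvdIdeal_sq hq
    (hH ▸ Ideal.pow_le_pow_right hp.two_le (Ideal.pow_mem_pow hgq p))
end

section
/- Let K ⊂ L be a finite purely inseparable field extension of height ≤ 1 (i.e., L^p ⊂ K). Then R = L ⊗_K L is a local Artin ring whose residue field is isomorphic to L, and the embedding dimension of R equals the p-degree of the extension K ⊂ L (the cardinality of a p-basis). -/
/-!
Let `I` be the kernel of the multiplication map `L ⊗[K] L → L`. Since `L ^ p ⊆ K`, every generator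
`1 ⊗ s - s ⊗ 1` of `I` has `p`-th power `1 ⊗ s ^ p - s ^ p ⊗ 1 = 0`, so `I` is a nil ideal with
quotient the field `L`: it is the nilradical and the unique maximal ideal of `L ⊗[K] L`, and the
residue field is `L`. The cotangent space `I / I²` is the module of Kähler differentials `Ω[L⁄K]`,
and it has basis `d a₁, …, d aₙ`: the `aᵢ` generate `L`, and the partial derivatives
`∂ⱼ (a₁^{e₁} ⋯ aₙ^{eₙ}) = eⱼ a₁^{e₁} ⋯ aₙ^{eₙ} / aⱼ` are well defined derivations because, in
characteristic `p`, the exponents only matter modulo `p`.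
-/

open TensorProduct IsLocalRing KaehlerDifferential Module

theorem IsLocalRing.finrank_cotangentSpace_eq_of_surjective {F R : Type*} [Field F] [CommRing R]
    [IsLocalRing R] [Algebra F R] (h : Function.Surjective ((residue R).comp (algebraMap F R))) :
    finrank F (CotangentSpace R) = finrank (ResidueField R) (CotangentSpace R) := by
  rw [finrank, finrank, rank_eq_of_equiv_equiv _ (AddEquiv.refl _) ⟨RingHom.injective _, h⟩]
  intro c m
  rw [RingHom.comp_apply, ← algebraMap_smul R c m]
  exact (algebraMap_smul (ResidueField R) (algebraMap F R c) m).symm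

theorem Module.Basis.leibniz_of_basis {ι R A : Type*} [CommSemiring R] [CommSemiring A]
    [Algebra R A] (b : Basis ι R A) (D : A →ₗ[R] A)
    (h : ∀ i j, D (b i * b j) = b i * D (b j) + b j * D (b i)) (x y : A) :
    D (x * y) = x * D y + y * D x := by
  let lhs : A →ₗ[R] A →ₗ[R] A := (LinearMap.mul R A).compr₂ D
  let rhs : A →ₗ[R] A →ₗ[R] A :=
    (LinearMap.mul R A).compl₂ D + ((LinearMap.mul R A).compl₂ D).flip
  have : lhs = rhs := b.ext fun i => b.ext fun j => by simpa [lhs, rhs] using h i j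
  simpa [lhs, rhs] using LinearMap.congr_fun₂ this x y

section Kaehler

variable {R S : Type*} [CommRing R] [CommRing S] [Algebra R S] {ι : Type*}

theorem KaehlerDifferential.span_range_D_of_adjoin_eq_top {x : ι → S}
    (hx : Algebra.adjoin R (Set.range x) = ⊤) :
    Submodule.span S (Set.range fun i => D R S (x i)) = ⊤ := by
  rw [eq_top_iff, ← span_range_derivation, Submodule.span_le]
  rintro _ ⟨s, rfl⟩
  have hs : s ∈ Algebra.adjoin R (Set.range x) := hx ▸ Algebra.mem_top
  induction hs using Algebra.adjoin_induction with
  | mem s hs =>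
    obtain ⟨i, rfl⟩ := hs
    exact Submodule.subset_span ⟨i, rfl⟩
  | algebraMap r => simp
  | add s t _ _ hs ht => rw [map_add]; exact add_mem hs ht
  | mul s t _ _ hs ht =>
    rw [Derivation.leibniz]
    exact add_mem (Submodule.smul_mem _ _ ht) (Submodule.smul_mem _ _ hs)

theorem KaehlerDifferential.linearIndependent_D_of_derivation [DecidableEq ι] (x : ι → S)
    (d : ι → Derivation R S S) (hd : ∀ i j, d j (x i) = (Pi.single i 1 : ι → S) j) :
    LinearIndependent S fun i => D R S (x i) := by
  let coords : Ω[S⁄R] →ₗ[S] ι → S := LinearMap.pi fun j => (d j).liftKaehlerDifferential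
  refine LinearIndependent.of_comp coords ?_
  convert Pi.linearIndependent_single_one ι S using 1
  ext i j
  simp [coords, hd]

theorem KaehlerDifferential.finrank_eq_card_of_derivation [Nontrivial S] [Fintype ι] [DecidableEq ι]
    (x : ι → S) (d : ι → Derivation R S S) (hd : ∀ i j, d j (x i) = (Pi.single i 1 : ι → S) j)
    (hx : Algebra.adjoin R (Set.range x) = ⊤) :
    finrank S Ω[S⁄R] = Fintype.card ι :=
  finrank_eq_card_basis <| .mk (linearIndependent_D_of_derivation x d hd)
    (span_range_D_of_adjoin_eq_top hx).ge

end Kaehler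

section TensorProductSelf

variable {K L : Type*} [CommRing K] [Field L] [Algebra K L]

theorem KaehlerDifferential.isMaximal_ideal : (ideal K L).IsMaximal :=
  RingHom.ker_isMaximal_of_surjective _ fun x => ⟨x ⊗ₜ 1, by simp⟩

variable [IsLocalRing (L ⊗[K] L)]

theorem maximalIdeal_tensorProduct_self : maximalIdeal (L ⊗[K] L) = ideal K L :=
  (eq_maximalIdeal isMaximal_ideal).symm

noncomputable def residueFieldTensorProductSelfEquiv : ResidueField (L ⊗[K] L) ≃+* L :=
  (Ideal.quotEquivOfEq maximalIdeal_tensorProduct_self).trans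
    (RingHom.quotientKerEquivOfSurjective fun x => ⟨x ⊗ₜ 1, by simp⟩)

theorem residueFieldTensorProductSelfEquiv_residue_algebraMap (x : L) :
    residueFieldTensorProductSelfEquiv (residue _ (algebraMap L (L ⊗[K] L) x)) = x := by
  change Algebra.TensorProduct.lmul' K (x ⊗ₜ[K] (1 : L)) = x
  simp

theorem finrank_cotangentSpace_tensorProduct_self :
    finrank (ResidueField (L ⊗[K] L)) (CotangentSpace (L ⊗[K] L)) = finrank L Ω[L⁄K] := by
  rw [← finrank_cotangentSpace_eq_of_surjective (F := L)]
  · change finrank L (maximalIdeal _).Cotangent = _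
    rw [maximalIdeal_tensorProduct_self]
    rfl -- `Ω[L⁄K]` is defined as `(ideal K L).Cotangent`
  · intro y
    refine ⟨residueFieldTensorProductSelfEquiv y, residueFieldTensorProductSelfEquiv.injective ?_⟩
    exact residueFieldTensorProductSelfEquiv_residue_algebraMap _

end TensorProductSelf

section PurelyInseparable

variable {K L : Type*} [Field K] [Field L] [Algebra K L]

theorem KaehlerDifferential.ideal_le_nilradical_of_pow_mem (p : ℕ) [Fact p.Prime] [CharP K p]
    (hheight : ∀ x : L, x ^ p ∈ (algebraMap K L).range) :
    ideal K L ≤ nilradical (L ⊗[K] L) := by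
  have : CharP (L ⊗[K] L) p := charP_of_injective_algebraMap' K p
  rw [← span_range_eq_ideal, Ideal.span_le]
  rintro _ ⟨s, rfl⟩
  obtain ⟨c, hc⟩ := hheight s
  show IsNilpotent _
  refine ⟨p, ?_⟩
  rw [sub_pow_char, Algebra.TensorProduct.tmul_pow, Algebra.TensorProduct.tmul_pow, one_pow, ← hc,
    Algebra.algebraMap_eq_smul_one, smul_tmul, sub_self]

theorem KaehlerDifferential.nilradical_eq_ideal_of_pow_mem (p : ℕ) [Fact p.Prime] [CharP K p]
    (hheight : ∀ x : L, x ^ p ∈ (algebraMap K L).range) :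
    nilradical (L ⊗[K] L) = ideal K L :=
  le_antisymm (@nilradical_le_prime _ _ _ isMaximal_ideal.isPrime)
    (ideal_le_nilradical_of_pow_mem p hheight)

theorem isLocalRing_tensorProduct_self_of_pow_mem (p : ℕ) [Fact p.Prime] [CharP K p]
    (hheight : ∀ x : L, x ^ p ∈ (algebraMap K L).range) : IsLocalRing (L ⊗[K] L) :=
  have : (nilradical (L ⊗[K] L)).IsMaximal :=
    nilradical_eq_ideal_of_pow_mem p hheight ▸ isMaximal_ideal
  .of_isMaximal_nilradical _

end PurelyInseparable

section PBasis

variable {K L : Type*} [Field K] [Field L] [Algebra K L] {p : ℕ} {ι : Type*} [Fintype ι]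
  {a : ι → L} {b : Basis (ι → Fin p) K L}

theorem adjoin_range_eq_top_of_pBasis (hb : ∀ e, b e = ∏ i, a i ^ (e i : ℕ)) :
    Algebra.adjoin K (Set.range a) = ⊤ := by
  refine eq_top_iff.2 fun x _ => ?_
  have hspan : Submodule.span K (Set.range b) ≤
      Subalgebra.toSubmodule (Algebra.adjoin K (Set.range a)) := by
    refine Submodule.span_le.2 (Set.range_subset_iff.2 fun e => ?_)
    rw [hb]
    exact (Subalgebra.mem_toSubmodule _).2 <|
      prod_mem fun i _ => pow_mem (Algebra.subset_adjoin (Set.mem_range_self i)) _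
  exact hspan (b.mem_span x)

variable [Fact p.Prime]

theorem ne_zero_of_pBasis (hb : ∀ e, b e = ∏ i, a i ^ (e i : ℕ)) (i : ι) : a i ≠ 0 := by
  classical
  have := hb (Pi.single i 1)
  rw [Fintype.prod_eq_single i fun k hk => by simp [hk], Pi.single_eq_same, Fin.val_one',
    Nat.mod_eq_of_lt (Fact.out : p.Prime).one_lt, pow_one] at this
  exact this ▸ b.ne_zero _

theorem exists_prod_pow_eq_smul_pBasis (hheight : ∀ x : L, x ^ p ∈ (algebraMap K L).range)
    (hb : ∀ e, b e = ∏ i, a i ^ (e i : ℕ)) (q : ι → ℕ) :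
    ∃ (c : K) (e : ι → Fin p), (∀ i, (e i : ℕ) ≡ q i [MOD p]) ∧ ∏ i, a i ^ q i = c • b e := by
  have hp := (Fact.out : p.Prime).pos
  choose c hc using fun i => hheight (a i)
  refine ⟨∏ i, c i ^ (q i / p), fun i => ⟨q i % p, Nat.mod_lt _ hp⟩, fun i => Nat.mod_modEq _ _, ?_⟩
  rw [hb, Algebra.smul_def, map_prod, ← Finset.prod_mul_distrib]
  refine Finset.prod_congr rfl fun i _ => ?_
  rw [map_pow, hc, ← pow_mul, ← pow_add, Nat.div_add_mod]

variable (a b) in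
noncomputable def pBasisPartial (j : ι) : L →ₗ[K] L :=
  b.constr K fun e => (e j : ℕ) * b e * (a j)⁻¹

variable [CharP K p]

theorem pBasisPartial_prod_pow (hheight : ∀ x : L, x ^ p ∈ (algebraMap K L).range)
    (hb : ∀ e, b e = ∏ i, a i ^ (e i : ℕ)) (j : ι) (q : ι → ℕ) :
    pBasisPartial a b j (∏ i, a i ^ q i) = q j * (∏ i, a i ^ q i) * (a j)⁻¹ := by
  have : CharP L p := charP_of_injective_algebraMap' K p
  obtain ⟨c, e, he, hce⟩ := exists_prod_pow_eq_smul_pBasis hheight hb q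
  rw [hce, map_smul, pBasisPartial, b.constr_basis, (CharP.natCast_eq_natCast L p).2 (he j),
    Algebra.smul_def, Algebra.smul_def]
  ring

theorem pBasisPartial_leibniz (hheight : ∀ x : L, x ^ p ∈ (algebraMap K L).range)
    (hb : ∀ e, b e = ∏ i, a i ^ (e i : ℕ)) (j : ι) (x y : L) :
    pBasisPartial a b j (x * y) = x * pBasisPartial a b j y + y * pBasisPartial a b j x := by
  refine b.leibniz_of_basis _ (fun e f => ?_) x y
  have hef : b e * b f = ∏ i, a i ^ ((e i : ℕ) + f i) := by
    simp only [hb, pow_add, Finset.prod_mul_distrib]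
  rw [hef, pBasisPartial_prod_pow hheight hb, ← hef, pBasisPartial, b.constr_basis, b.constr_basis]
  push_cast
  ring

noncomputable def pBasisDerivation (hheight : ∀ x : L, x ^ p ∈ (algebraMap K L).range)
    (hb : ∀ e, b e = ∏ i, a i ^ (e i : ℕ)) (j : ι) : Derivation K L L :=
  .mk' (pBasisPartial a b j) (pBasisPartial_leibniz hheight hb j)

theorem pBasisDerivation_apply [DecidableEq ι] (hheight : ∀ x : L, x ^ p ∈ (algebraMap K L).range)
    (hb : ∀ e, b e = ∏ i, a i ^ (e i : ℕ)) (i j : ι) :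
    pBasisDerivation hheight hb j (a i) = (Pi.single i 1 : ι → L) j := by
  have := pBasisPartial_prod_pow hheight hb j (Pi.single i 1)
  rw [Fintype.prod_eq_single i fun k hk => by simp [hk], Pi.single_eq_same, pow_one] at this
  rw [pBasisDerivation, Derivation.coe_mk', this]
  obtain rfl | hij := eq_or_ne j i
  · simp [ne_zero_of_pBasis hb j]
  · simp [hij]

theorem finrank_kaehlerDifferential_of_pBasis
    (hheight : ∀ x : L, x ^ p ∈ (algebraMap K L).range) (hb : ∀ e, b e = ∏ i, a i ^ (e i : ℕ)) :
    finrank L Ω[L⁄K] = Fintype.card ι := by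
  classical
  exact finrank_eq_card_of_derivation a (pBasisDerivation hheight hb) (pBasisDerivation_apply hheight hb)
    (adjoin_range_eq_top_of_pBasis hb)

end PBasis

/-- Let `K ⊂ L` be a finite purely inseparable field extension of height `≤ 1`
(`L^p ⊂ K`), with a `p`-basis `a₁, …, aₙ` (the monomials `a₁^{e₁} ⋯ aₙ^{eₙ}` with
`0 ≤ eᵢ < p` form a `K`-basis of `L`).  Then `R = L ⊗_K L` is a local Artin ring with
residue field isomorphic to `L`, and the embedding dimension of `R` equals the
`p`-degree `n` of the extension `K ⊂ L`. -/
theorem stmt_5 (p : ℕ) [Fact p.Prime] (K L : Type) [Field K] [Field L] [Algebra K L]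
    [CharP K p] (hheight : ∀ x : L, x ^ p ∈ (algebraMap K L).range)
    (n : ℕ) (a : Fin n → L) (b : Module.Basis (Fin n → Fin p) K L)
    (hb : ∀ e : Fin n → Fin p, b e = ∏ i, a i ^ (e i : ℕ)) :
    ∃ h : IsLocalRing (TensorProduct K L L),
      IsArtinianRing (TensorProduct K L L) ∧
      Nonempty (@IsLocalRing.ResidueField (TensorProduct K L L) _ h ≃+* L) ∧
      @embDim (TensorProduct K L L) _ h = n := by
  have hlocal := isLocalRing_tensorProduct_self_of_pow_mem p hheight
  have : Module.Finite K L := .of_basis b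
  refine ⟨hlocal, .of_finite K _, ⟨residueFieldTensorProductSelfEquiv⟩, ?_⟩
  rw [embDim, finrank_cotangentSpace_tensorProduct_self,
    finrank_kaehlerDifferential_of_pBasis hheight hb, Fintype.card_fin]
end

section
/- Let K be a field of characteristic p > 0 and F a finitely generated separable extension of K. Then for any purely inseparable field extension K ⊂ K', the ring F ⊗_K K' is a field. -/
/-
Let `E = K(t)` for the separating transcendence basis `t`. Since `E ⊗_K K'` is a localization of
`K'[t]`, it is a domain. As `F / E` is separable, `F ⊗_K K' ≅ F ⊗_E (E ⊗_K K')` embeds into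
`F ⊗_E Frac(E ⊗_K K')`, which is reduced, so `F ⊗_K K'` is reduced. Finally, because `K' / K` is
purely inseparable, every element of `F ⊗_K K'` has a power lying in `F`; a nonzero element of a
reduced ring with this property has a nonzero, hence invertible, power, so it is a unit.
-/

open TensorProduct

theorem isDomain_fractionRing_tensorProduct (K A L : Type*) [Field K] [CommRing A] [Nontrivial A]
    [Algebra K A] [CommRing L] [Nontrivial L] [Algebra K L] [IsDomain (A ⊗[K] L)] :
    IsDomain (FractionRing A ⊗[K] L) := by
  let := (Algebra.TensorProduct.map (Algebra.ofId A (FractionRing A)) (AlgHom.id K L)).toAlgebra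
  have : IsLocalization (Algebra.algebraMapSubmonoid (A ⊗[K] L) (nonZeroDivisors A))
      (FractionRing A ⊗[K] L) := by
    refine IsLocalization.tensorProduct_tensorProduct _ _ _ _ ?_
    ext; simp [RingHom.algebraMap_toAlgebra]
  refine IsLocalization.isDomain_of_le_nonZeroDivisors _
    (M := Algebra.algebraMapSubmonoid (A ⊗[K] L) (nonZeroDivisors A)) ?_
  rintro _ ⟨a, ha, rfl⟩
  refine mem_nonZeroDivisors_of_ne_zero ?_
  simpa using (Algebra.TensorProduct.includeLeft_injective (S := K) (algebraMap K L).injective).ne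
    (nonZeroDivisors.ne_zero ha)

theorem isDomain_adjoin_tensorProduct_of_algebraicIndependent {K F ι : Type*} [Field K] [Field F]
    [Algebra K F] {x : ι → F} (hx : AlgebraicIndependent K x) (L : Type*) [CommRing L]
    [IsDomain L] [Algebra K L] :
    IsDomain (IntermediateField.adjoin K (Set.range x) ⊗[K] L) := by
  have : IsDomain (MvPolynomial ι K ⊗[K] L) :=
    ((Algebra.TensorProduct.comm K _ L).trans
      ((MvPolynomial.algebraTensorAlgEquiv (σ := ι) K L).restrictScalars K)).toMulEquiv.isDomain
  have := isDomain_fractionRing_tensorProduct K (MvPolynomial ι K) L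
  exact (Algebra.TensorProduct.congr hx.aevalEquivField AlgEquiv.refl).symm.toMulEquiv.isDomain

theorem isReduced_tensorProduct_of_isSeparable (E M F : Type*) [Field E] [Field M] [Field F]
    [Algebra E M] [Algebra E F] [Algebra.IsSeparable E F] : IsReduced (M ⊗[E] F) := by
  refine IsReduced.tensorProduct_of_flat_of_forall_fg fun B hB ↦ ?_
  let : Field B := (Subalgebra.isField_of_algebraic B).toField
  have : Algebra.IsSeparable E B := .of_algHom E F B.val
  have : Algebra.FiniteType E B := (Subalgebra.fg_iff_finiteType B).1 hB
  have : Algebra.FormallyUnramified E B := .of_isSeparable E B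
  exact Algebra.FormallyUnramified.isReduced_of_field M (M ⊗[E] B)

theorem isReduced_tensorProduct_of_isSeparable_of_isDomain (K E F A : Type*) [Field K] [Field E]
    [Field F] [CommRing A] [Algebra K E] [Algebra K F] [Algebra E F] [IsScalarTower K E F]
    [Algebra K A] [Algebra.IsSeparable E F] [IsDomain (E ⊗[K] A)] : IsReduced (F ⊗[K] A) := by
  let M := FractionRing (E ⊗[K] A)
  have := isReduced_tensorProduct_of_isSeparable E M F
  have : IsReduced (F ⊗[E] M) :=
    isReduced_of_injective (Algebra.TensorProduct.comm E F M).toRingHom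
      (Algebra.TensorProduct.comm E F M).injective
  let ι := Algebra.TensorProduct.map (AlgHom.id E F) (IsScalarTower.toAlgHom E (E ⊗[K] A) M)
  have hι : Function.Injective ι :=
    Module.Flat.lTensor_preserves_injective_linearMap _ (IsFractionRing.injective _ M)
  let e := Algebra.TensorProduct.cancelBaseChange K E E F A
  exact isReduced_of_injective (ι.comp e.symm.toAlgHom).toRingHom (hι.comp e.symm.injective)

theorem isField_of_forall_exists_pow_mem_range {L R : Type*} [Field L] [CommRing R]
    [IsReduced R] [Nontrivial R] (f : L →+* R) (H : ∀ x : R, ∃ n > 0, x ^ n ∈ f.range) :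
    IsField R := by
  refine ⟨exists_pair_ne R, mul_comm, fun {x} hx ↦ ?_⟩
  obtain ⟨n, hn, a, ha⟩ := H x
  have ha0 : a ≠ 0 := by
    rintro rfl
    exact hx (IsNilpotent.eq_zero ⟨n, by rw [← ha, map_zero]⟩)
  have : IsUnit (x ^ n) := ha ▸ (isUnit_iff_ne_zero.2 ha0).map f
  exact ((isUnit_pow_iff hn.ne').1 this).exists_right_inv

theorem stmt_9_general (K F : Type) [Field K] [Field F] [Algebra K F]
    (hsep : ∃ (n : ℕ) (t : Fin n → F), IsTranscendenceBasis K t ∧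
      Algebra.IsSeparable ↥(IntermediateField.adjoin K (Set.range t)) F) :
    ∀ (K' : Type) [Field K'] [Algebra K K'] [IsPurelyInseparable K K'],
      IsField (TensorProduct K F K') := by
  intro K' _ _ _
  obtain ⟨n, t, ht, hsepF⟩ := hsep
  have := isDomain_adjoin_tensorProduct_of_algebraicIndependent ht.1 K'
  have := isReduced_tensorProduct_of_isSeparable_of_isDomain K
    (IntermediateField.adjoin K (Set.range t)) F K'
  exact isField_of_forall_exists_pow_mem_range (algebraMap F (F ⊗[K] K'))
    IsPurelyInseparable.exists_pow_mem_range_tensorProduct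

/-- Let `K` be a field of characteristic `p > 0` and `F` a finitely generated separable
(in the sense of MacLane, i.e. separably generated) field extension of `K`.  Then for any
purely inseparable field extension `K ⊂ K'`, the ring `F ⊗_K K'` is a field. -/
theorem stmt_9 (p : ℕ) [Fact p.Prime] (K F : Type) [Field K] [Field F] [Algebra K F]
    [CharP K p]
    (hfg : ∃ s : Finset F, IntermediateField.adjoin K (s : Set F) = ⊤)
    (hsep : ∃ (n : ℕ) (t : Fin n → F), IsTranscendenceBasis K t ∧
      Algebra.IsSeparable ↥(IntermediateField.adjoin K (Set.range t)) F) :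
    ∀ (K' : Type) [Field K'] [Algebra K K'] [IsPurelyInseparable K K'],
      IsField (TensorProduct K F K') :=
  stmt_9_general K F hsep
end

section
/- Let K be a field of characteristic p > 0 and λ_0, ..., λ_n ∈ K with λ_r ≠ 0. Then the subfield of K generated over K^p by all fractions f(α)/f(β), where f(U) = Σ λ_i U_i^p, α, β ∈ K^{n+1}, and f(β) ≠ 0, equals the subfield of K generated over K^p by the fractions λ_i/λ_r for 0 ≤ i ≤ n. -/
/-!
Scaling `f` by `λ_r⁻¹` does not change the fractions `f(α)/f(β)`, and after scaling every value
`f(α) = ∑ (λᵢ/λ_r) αᵢ^p` visibly lies in the right-hand field. Conversely, evaluating `f` at the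
standard basis vectors gives `f(eᵢ) = λᵢ`, so `λᵢ/λ_r = f(eᵢ)/f(e_r)` is one of the generators
on the left.
-/

open Finset

theorem sum_mul_pi_single_pow {ι R : Type*} [Fintype ι] [DecidableEq ι] [Semiring R] {p : ℕ}
    (hp : p ≠ 0) (c : ι → R) (i : ι) :
    ∑ j, c j * (Pi.single i 1 : ι → R) j ^ p = c i := by
  rw [Fintype.sum_eq_single i fun j hj => by simp [Pi.single_eq_of_ne hj, zero_pow hp]]
  simp

theorem sum_div_mul_pow {ι K : Type*} [Fintype ι] [Semifield K] (c : ι → K) (d : K)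
    (γ : ι → K) (p : ℕ) :
    ∑ i, c i / d * γ i ^ p = (∑ i, c i * γ i ^ p) / d := by
  simp_rw [sum_div, div_mul_eq_mul_div]

theorem sum_mul_pow_div_sum_mul_pow_mem {ι K : Type*} [Fintype ι] [Field K] (S : Subfield K)
    {p : ℕ} (hpow : ∀ x : K, x ^ p ∈ S) (lam : ι → K) {r : ι} (hr : lam r ≠ 0)
    (hlam : ∀ i, lam i / lam r ∈ S) (α β : ι → K) :
    (∑ i, lam i * α i ^ p) / (∑ i, lam i * β i ^ p) ∈ S := by
  have hmem : ∀ γ : ι → K, ∑ i, lam i / lam r * γ i ^ p ∈ S := fun γ =>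
    S.sum_mem fun i _ => S.mul_mem (hlam i) (hpow (γ i))
  rw [← div_div_div_cancel_right₀ hr, ← sum_div_mul_pow lam _ α, ← sum_div_mul_pow lam _ β]
  exact S.div_mem (hmem α) (hmem β)

theorem stmt_11_general (p : ℕ) [Fact p.Prime] (K : Type) [Field K]
    (n : ℕ) (lam : Fin (n + 1) → K) (r : Fin (n + 1)) (hr : lam r ≠ 0) :
    Subfield.closure ((Set.range fun x : K => x ^ p) ∪
        {x : K | ∃ α β : Fin (n + 1) → K, (∑ i, lam i * β i ^ p) ≠ 0 ∧
          x = (∑ i, lam i * α i ^ p) / (∑ i, lam i * β i ^ p)}) =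
      Subfield.closure ((Set.range fun x : K => x ^ p) ∪
        Set.range fun i : Fin (n + 1) => lam i / lam r) := by
  have hf := sum_mul_pi_single_pow (Fact.out : p.Prime).ne_zero lam
  apply le_antisymm <;> rw [Subfield.closure_le]
  · rintro _ (⟨y, rfl⟩ | ⟨α, β, -, rfl⟩)
    · exact Subfield.subset_closure (Or.inl ⟨y, rfl⟩)
    · refine sum_mul_pow_div_sum_mul_pow_mem _ (fun x => ?_) lam hr (fun i => ?_) α β
      exacts [Subfield.subset_closure (Or.inl ⟨x, rfl⟩), Subfield.subset_closure (Or.inr ⟨i, rfl⟩)]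
  · rintro _ (⟨y, rfl⟩ | ⟨i, rfl⟩)
    · exact Subfield.subset_closure (Or.inl ⟨y, rfl⟩)
    · exact Subfield.subset_closure
        (Or.inr ⟨Pi.single i 1, Pi.single r 1, by rwa [hf], by rw [hf, hf]⟩)

/-- Let `K` be a field of characteristic `p > 0` and `λ₀, …, λₙ ∈ K` with `λ_r ≠ 0`.
Let `f(α) = ∑ λᵢ αᵢ^p`.  Then the subfield of `K` generated over `K^p` by all fractions
`f(α)/f(β)` with `f(β) ≠ 0` equals the subfield generated over `K^p` by the fractions
`λᵢ/λ_r`, `0 ≤ i ≤ n`. -/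
theorem stmt_11 (p : ℕ) [Fact p.Prime] (K : Type) [Field K] [CharP K p]
    (n : ℕ) (lam : Fin (n + 1) → K) (r : Fin (n + 1)) (hr : lam r ≠ 0) :
    Subfield.closure ((Set.range fun x : K => x ^ p) ∪
        {x : K | ∃ α β : Fin (n + 1) → K, (∑ i, lam i * β i ^ p) ≠ 0 ∧
          x = (∑ i, lam i * α i ^ p) / (∑ i, lam i * β i ^ p)}) =
      Subfield.closure ((Set.range fun x : K => x ^ p) ∪
        Set.range fun i : Fin (n + 1) => lam i / lam r) :=
  stmt_11_general p K n lam r hr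
end

section
/- Let R = L[u]/(u^{p-1}) where L is a field of characteristic p ≥ 3, and let v, w ∈ m_R (the maximal ideal) generate a K-subalgebra S = K[v,w] ⊂ R for a subfield K ⊂ L with [L:K] = p, such that dim_K(S) = p(p−1)/2. Then the images of v and w in m_R/m_R^2 are K-linearly independent. -/
/-!
If `a ≠ 0`, then `K[v, w] = K[z, w]` with `z = a • v + b • w ∈ m_R²`. As `w ^ (p - 1) = 0` and
`z ^ ((p - 1) / 2) = 0`, the algebra `K[z, w]` is spanned by the `(p - 1) * (p - 1) / 2`
monomials `w ^ i * z ^ j` with `i < p - 1` and `j < (p - 1) / 2`, fewer than `p * (p - 1) / 2`.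
The case `b ≠ 0` is symmetric.
-/

open Polynomial Module

section

variable {K A : Type*} [Field K] [CommRing A] [Algebra K A]

theorem Algebra.finrank_adjoin_pair_le_of_pow_eq_zero {w z : A} {m n : ℕ} (hw : w ^ m = 0)
    (hz : z ^ n = 0) : finrank K (Algebra.adjoin K {w, z}) ≤ m * n := by
  let mono : Fin m × Fin n → A := fun ij => w ^ (ij.1 : ℕ) * z ^ (ij.2 : ℕ)
  have hle :
      Subalgebra.toSubmodule (Algebra.adjoin K {w, z}) ≤ Submodule.span K (Set.range mono) := by
    rw [Algebra.adjoin_eq_span, Submodule.span_le]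
    rintro _ hx
    obtain ⟨i, j, rfl⟩ := (Submonoid.mem_closure_pair w z _).mp hx
    by_cases hij : i < m ∧ j < n
    · exact Submodule.subset_span ⟨(⟨i, hij.1⟩, ⟨j, hij.2⟩), rfl⟩
    · have hzero : w ^ i * z ^ j = 0 := by
        rcases not_and_or.mp hij with hi | hj
        · rw [pow_eq_zero_of_le (not_lt.mp hi) hw, zero_mul]
        · rw [pow_eq_zero_of_le (not_lt.mp hj) hz, mul_zero]
      rw [SetLike.mem_coe, hzero]
      exact zero_mem _
  have : Module.Finite K (Submodule.span K (Set.range mono)) :=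
    Module.Finite.span_of_finite K (Set.finite_range mono)
  calc finrank K (Algebra.adjoin K {w, z})
      ≤ finrank K (Submodule.span K (Set.range mono)) := Submodule.finrank_mono hle
    _ ≤ m * n := (finrank_range_le_card mono).trans_eq (by simp)

theorem Algebra.adjoin_smul_add_smul_pair {a : K} (ha : a ≠ 0) (b : K) (v w : A) :
    Algebra.adjoin K {a • v + b • w, w} = Algebra.adjoin K {v, w} := by
  have hw : w ∈ Algebra.adjoin K {v, w} := Algebra.subset_adjoin (by simp)
  have hv : v ∈ Algebra.adjoin K {a • v + b • w, w} := by
    have hz : a • v + b • w ∈ Algebra.adjoin K {a • v + b • w, w} :=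
      Algebra.subset_adjoin (by simp)
    have hw' : w ∈ Algebra.adjoin K {a • v + b • w, w} := Algebra.subset_adjoin (by simp)
    simpa [smul_smul, ha] using
      Subalgebra.smul_mem _ (sub_mem hz (Subalgebra.smul_mem _ hw' b)) a⁻¹
  refine le_antisymm (Algebra.adjoin_le ?_) (Algebra.adjoin_le ?_)
  · rintro _ (rfl | rfl)
    · exact add_mem (Subalgebra.smul_mem _ (Algebra.subset_adjoin (by simp)) a)
        (Subalgebra.smul_mem _ hw b)
    · exact hw
  · rintro _ (rfl | rfl)
    · exact hv
    · exact Algebra.subset_adjoin (by simp)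

theorem finrank_adjoin_le_of_smul_add_smul_mem_sq {I : Ideal A} {n : ℕ} (hI : I ^ n = ⊥)
    {v w : A} (hw : w ∈ I) {a : K} (ha : a ≠ 0) {b : K} (h : a • v + b • w ∈ I ^ 2) :
    finrank K (Algebra.adjoin K {v, w}) ≤ n * ((n + 1) / 2) := by
  have hwn : w ^ n = 0 := by
    simpa [hI] using Ideal.pow_mem_pow hw n
  have hzn : (a • v + b • w) ^ ((n + 1) / 2) = 0 := by
    have := Ideal.pow_mem_pow h ((n + 1) / 2)
    rw [← pow_mul] at this
    simpa [hI] using Ideal.pow_le_pow_right (show n ≤ 2 * ((n + 1) / 2) by omega) this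
  rw [← Algebra.adjoin_smul_add_smul_pair ha b v w, Set.pair_comm]
  exact Algebra.finrank_adjoin_pair_le_of_pow_eq_zero hwn hzn

end

theorem Polynomial.span_mk_X_pow_eq_bot (R : Type*) [CommRing R] (n : ℕ) :
    Ideal.span {Ideal.Quotient.mk (Ideal.span {(X : R[X]) ^ n}) X} ^ n = ⊥ := by
  rw [Ideal.span_singleton_pow, ← map_pow, Ideal.span_singleton_eq_bot,
    Ideal.Quotient.eq_zero_iff_mem]
  exact Ideal.subset_span rfl

theorem stmt_18_general (p : ℕ) [Fact p.Prime] (hp3 : 3 ≤ p) (K L : Type) [Field K] [Field L]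
    [Algebra K L]
    (v w : Polynomial L ⧸ Ideal.span {(X : L[X]) ^ (p - 1)})
    (hv : v ∈ Ideal.span {Ideal.Quotient.mk (Ideal.span {(X : L[X]) ^ (p - 1)}) X})
    (hw : w ∈ Ideal.span {Ideal.Quotient.mk (Ideal.span {(X : L[X]) ^ (p - 1)}) X})
    (hdimS : Module.finrank K ↥(Algebra.adjoin K {v, w}) = p * (p - 1) / 2) :
    ∀ a b : K, a • v + b • w ∈
        (Ideal.span {Ideal.Quotient.mk (Ideal.span {(X : L[X]) ^ (p - 1)}) X}) ^ 2 →
      a = 0 ∧ b = 0 := by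
  intro a b hab
  have hI := span_mk_X_pow_eq_bot L (p - 1)
  have hlt : ¬ p * (p - 1) / 2 ≤ (p - 1) * ((p - 1 + 1) / 2) := by
    obtain ⟨k, rfl⟩ : Odd p := (Fact.out : p.Prime).odd_of_ne_two (by omega)
    rw [Nat.add_sub_cancel, mul_left_comm, Nat.mul_div_cancel_left _ two_pos,
      show (2 * k + 1) / 2 = k by omega]
    nlinarith
  constructor
  · by_contra ha
    exact hlt (hdimS ▸ finrank_adjoin_le_of_smul_add_smul_mem_sq hI hw ha hab)
  · by_contra hb
    rw [Set.pair_comm] at hdimS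
    exact hlt (hdimS ▸
      finrank_adjoin_le_of_smul_add_smul_mem_sq hI hv hb (add_comm (a • v) _ ▸ hab))

/-- Let `R = L[u]/(u^{p-1})` where `L` is a field of characteristic `p ≥ 3`, `K ⊂ L`
a subfield with `[L : K] = p` (purely inseparable), and `v, w` elements of the maximal
ideal `m_R = (u)` generating a `K`-subalgebra `S = K[v,w]` with `dim_K S = p(p-1)/2`.
Then the images of `v` and `w` in `m_R/m_R²` are `K`-linearly independent. -/
theorem stmt_18 (p : ℕ) [Fact p.Prime] (hp3 : 3 ≤ p) (K L : Type) [Field K] [Field L]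
    [Algebra K L] [CharP L p] [IsPurelyInseparable K L]
    (hdegL : Module.finrank K L = p)
    (v w : Polynomial L ⧸ Ideal.span {(X : L[X]) ^ (p - 1)})
    (hv : v ∈ Ideal.span {Ideal.Quotient.mk (Ideal.span {(X : L[X]) ^ (p - 1)}) X})
    (hw : w ∈ Ideal.span {Ideal.Quotient.mk (Ideal.span {(X : L[X]) ^ (p - 1)}) X})
    (hdimS : Module.finrank K ↥(Algebra.adjoin K {v, w}) = p * (p - 1) / 2) :
    ∀ a b : K, a • v + b • w ∈
        (Ideal.span {Ideal.Quotient.mk (Ideal.span {(X : L[X]) ^ (p - 1)}) X}) ^ 2 →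
      a = 0 ∧ b = 0 :=
  stmt_18_general p hp3 K L v w hv hw hdimS
end
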